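/- arXiv:2011.03532 — 3 statements merged into one kernel-verified Lean document; each statement's English description precedes it below -/
import Mathlib

section
/- Let Q ≥ 1 and let τ be the cyclic shift operator on (ℂ²)^{⊗Q}. For a root of unity ω of order d with d | Q, the complex dimension of the eigenspace Eig(ω) of τ equals Σ_{d | k | Q} #(k)/k, where #(k) is the number of length-k binary strings of minimal cyclic period exactly k. -/
/-- The translation (cyclic shift) operator on the `Q`-qubit state space. -/
noncomputable def translationOp (Q : ℕ) :
    Module.End ℂ ((Fin Q → Fin 2) → ℂ) :=
  LinearMap.funLeft ℂ ℂ (fun s => s ∘ finRotate Q)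

/-- `cnt k` is the number of binary strings of length `k` of minimal cyclic
period exactly `k`, defined by `cnt 1 = 2` and
`cnt k = 2^k − Σ_{k' ∣ k, k' < k} cnt k'`. -/
def cnt (d : ℕ) : ℤ :=
  2 ^ d - ∑ d' ∈ d.properDivisors.attach, cnt d'.1
decreasing_by exact (Nat.mem_properDivisors.mp d'.2).2

open Function Finset
open scoped Classical
open Fin.NatCast Fin.CommRing

set_option linter.unusedSectionVars false

noncomputable section Aux

/-- The shift permutation on basis strings. -/
def sQ (Q : ℕ) : Equiv.Perm (Fin Q → Fin 2) :=
  Equiv.arrowCongr (finRotate Q).symm (Equiv.refl (Fin 2))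

lemma sQ_apply {Q : ℕ} (s : Fin Q → Fin 2) : sQ Q s = s ∘ finRotate Q := rfl

lemma rot_pow {Q : ℕ} [NeZero Q] (n : ℕ) (i : Fin Q) :
    ((finRotate Q) ^ n) i = i + (n : Fin Q) := by
  rcases Q with - | Q
  · exact i.elim0
  · induction n with
    | zero => simp
    | succ n ih =>
      rw [pow_succ', Equiv.Perm.mul_apply, ih, finRotate_succ_apply,
        Nat.cast_add, Nat.cast_one]
      ring

lemma sQ_pow_apply {Q : ℕ} [NeZero Q] (n : ℕ) (s : Fin Q → Fin 2) (i : Fin Q) :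
    ((sQ Q ^ n) s) i = s (i + (n : Fin Q)) := by
  induction n generalizing s with
  | zero => simp
  | succ n ih =>
    rw [pow_succ, Equiv.Perm.mul_apply, sQ_apply, ih]
    show s (finRotate Q (i + (n : Fin Q))) = _
    rcases Q with - | Q
    · exact i.elim0
    · rw [finRotate_succ_apply, Nat.cast_add, Nat.cast_one]
      congr 1; ring

lemma sQ_pow_self {Q : ℕ} [NeZero Q] (s : Fin Q → Fin 2) : (sQ Q ^ Q) s = s := by
  funext i
  rw [sQ_pow_apply, Fin.natCast_self, add_zero]

end Aux

noncomputable section Orb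

variable (Q : ℕ) [NeZero Q]

/-- minimal period of a string under the shift. -/
def mp (s : Fin Q → Fin 2) : ℕ := Function.minimalPeriod (sQ Q) s

variable {Q}

lemma isPer_Q (s : Fin Q → Fin 2) : IsPeriodicPt (sQ Q) Q s := by
  show (⇑(sQ Q))^[Q] s = s
  rw [Equiv.Perm.iterate_eq_pow]
  exact sQ_pow_self s

lemma mp_pos (s : Fin Q → Fin 2) : 0 < mp Q s :=
  (isPer_Q s).minimalPeriod_pos (NeZero.pos Q)

lemma mp_dvd_Q (s : Fin Q → Fin 2) : mp Q s ∣ Q :=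
  (isPer_Q s).minimalPeriod_dvd

lemma pow_fix_iff (n : ℕ) (s : Fin Q → Fin 2) :
    (sQ Q ^ n) s = s ↔ mp Q s ∣ n := by
  show _ ↔ Function.minimalPeriod (sQ Q) s ∣ n
  rw [← Function.isPeriodicPt_iff_minimalPeriod_dvd]
  show _ ↔ (⇑(sQ Q))^[n] s = s
  rw [Equiv.Perm.iterate_eq_pow]

variable (Q)

/-- orbit relation: `t` is a shift of `s`. -/
def orbRel (s t : Fin Q → Fin 2) : Prop := ∃ n : ℕ, (sQ Q ^ n) s = t

variable {Q}

lemma orbRel_refl (s : Fin Q → Fin 2) : orbRel Q s s := ⟨0, by simp⟩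

lemma orbRel_trans {s t u : Fin Q → Fin 2} (h1 : orbRel Q s t) (h2 : orbRel Q t u) :
    orbRel Q s u := by
  obtain ⟨a, ha⟩ := h1
  obtain ⟨b, hb⟩ := h2
  exact ⟨b + a, by rw [pow_add, Equiv.Perm.mul_apply, ha, hb]⟩

lemma sQ_pow_mul_Q (c : ℕ) (s : Fin Q → Fin 2) : (sQ Q ^ (Q * c)) s = s := by
  induction c with
  | zero => simp
  | succ c ih =>
    rw [Nat.mul_succ, pow_add, Equiv.Perm.mul_apply, ← Equiv.Perm.iterate_eq_pow,
      Equiv.Perm.iterate_eq_pow, sQ_pow_self, ih]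

lemma orbRel_symm {s t : Fin Q → Fin 2} (h : orbRel Q s t) : orbRel Q t s := by
  obtain ⟨n, hn⟩ := h
  refine ⟨n * (Q - 1), ?_⟩
  rw [← hn, ← Equiv.Perm.mul_apply, ← pow_add]
  have hQ : 1 ≤ Q := NeZero.pos Q
  have : n * (Q - 1) + n = Q * n := by
    cases Q with
    | zero => omega
    | succ Q => simp only [Nat.add_sub_cancel]; ring
  rw [this]
  exact sQ_pow_mul_Q n s

variable (Q)

/-- The orbit setoid. -/
def orbSetoid : Setoid (Fin Q → Fin 2) :=
  ⟨orbRel Q, ⟨orbRel_refl, orbRel_symm, orbRel_trans⟩⟩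

/-- The type of orbits. -/
def OrbT := Quotient (orbSetoid Q)

instance : Fintype (OrbT Q) := Quotient.fintype _

variable {Q}

lemma mp_dvd_of_rel {s t : Fin Q → Fin 2} (h : orbRel Q s t) : mp Q t ∣ mp Q s := by
  obtain ⟨n, hn⟩ := h
  rw [← pow_fix_iff, ← hn, ← Equiv.Perm.mul_apply, ← pow_add, add_comm, pow_add,
    Equiv.Perm.mul_apply, (pow_fix_iff _ _).mpr dvd_rfl]

lemma mp_eq_of_rel {s t : Fin Q → Fin 2} (h : orbRel Q s t) : mp Q s = mp Q t :=
  Nat.dvd_antisymm (mp_dvd_of_rel (orbRel_symm h)) (mp_dvd_of_rel h)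

lemma out_rel (s : Fin Q → Fin 2) : orbRel Q (Quotient.mk (orbSetoid Q) s).out s := by
  have h := Quotient.out_eq (Quotient.mk (orbSetoid Q) s)
  exact Quotient.exact h

/-- The orbit of `s` as a finset. -/
def orbF (s : Fin Q → Fin 2) : Finset (Fin Q → Fin 2) :=
  (Finset.range (mp Q s)).image (fun j => (sQ Q ^ j) s)

lemma card_orbF (s : Fin Q → Fin 2) : (orbF s).card = mp Q s := by
  rw [orbF, Finset.card_image_of_injOn, Finset.card_range]
  have h := Function.iterate_injOn_Iio_minimalPeriod (f := ⇑(sQ Q)) (x := s)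
  rw [Finset.coe_range]
  intro a ha b hb hab
  exact h ha hb (by simpa [Equiv.Perm.iterate_eq_pow] using hab)

lemma mem_orbF {s t : Fin Q → Fin 2} : t ∈ orbF s ↔ orbRel Q s t := by
  constructor
  · rintro h
    obtain ⟨j, -, hj⟩ := Finset.mem_image.mp h
    exact ⟨j, hj⟩
  · rintro ⟨n, hn⟩
    refine Finset.mem_image.mpr ⟨n % mp Q s, Finset.mem_range.mpr (Nat.mod_lt _ (mp_pos s)), ?_⟩
    rw [← hn, ← Equiv.Perm.iterate_eq_pow, ← Equiv.Perm.iterate_eq_pow]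
    exact Function.iterate_mod_minimalPeriod_eq

end Orb

noncomputable section Count

set_option linter.unusedSectionVars false

variable {Q : ℕ} [NeZero Q]

lemma fix_iff {k : ℕ} (s : Fin Q → Fin 2) :
    (sQ Q ^ k) s = s ↔ ∀ i : Fin Q, s (i + (k : Fin Q)) = s i := by
  rw [funext_iff]
  constructor
  · intro h i; rw [← sQ_pow_apply k s i]; exact h i
  · intro h i; rw [sQ_pow_apply]; exact h i

lemma kmodQ_mod (k : ℕ) (hk : k ∣ Q) (hkpos : 0 < k) : (k % Q) % k = 0 := by
  rcases Nat.lt_or_ge k Q with h | h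
  · rw [Nat.mod_eq_of_lt h, Nat.mod_self]
  · have : k = Q := Nat.le_antisymm (Nat.le_of_dvd (NeZero.pos Q) hk) h
    rw [this, Nat.mod_self, Nat.zero_mod]

lemma periodic_val {k : ℕ} (hk : k ∣ Q) (hkpos : 0 < k) {s : Fin Q → Fin 2}
    (hs : ∀ i : Fin Q, s (i + (k : Fin Q)) = s i) (i : Fin Q) :
    s i = s ⟨i.val % k, lt_of_lt_of_le (Nat.mod_lt _ hkpos) (Nat.le_of_dvd (NeZero.pos Q) hk)⟩ := by
  suffices H : ∀ v : ℕ, ∀ i : Fin Q, i.val = v →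
      s i = s ⟨i.val % k, lt_of_lt_of_le (Nat.mod_lt _ hkpos) (Nat.le_of_dvd (NeZero.pos Q) hk)⟩ by
    exact H i.val i rfl
  intro v
  induction v using Nat.strong_induction_on with
  | _ v IH =>
    intro i hiv
    rcases Nat.lt_or_ge i.val k with h | h
    · congr 1
      exact (Fin.ext (Nat.mod_eq_of_lt h).symm)
    · have hkQ : k < Q := lt_of_le_of_lt h i.isLt
      set i' : Fin Q := ⟨i.val - k, lt_of_le_of_lt (Nat.sub_le _ _) i.isLt⟩ with hi'
      have hadd : i' + (k : Fin Q) = i := by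
        apply Fin.ext
        rw [Fin.add_def]
        simp only [Fin.val_natCast]
        rw [Nat.mod_eq_of_lt hkQ]
        have : i'.val + k = i.val := by simp [hi']; omega
        rw [this, Nat.mod_eq_of_lt i.isLt]
      have h1 : s i = s i' := by rw [← hadd, hs]
      have h2 := IH i'.val (by simp [hi']; omega) i' rfl
      rw [h1, h2]
      congr 1
      apply Fin.ext
      show (i.val - k) % k = i.val % k
      conv_rhs => rw [← Nat.sub_add_cancel h]
      rw [Nat.add_mod_right]

/-- strings fixed by the `k`-fold shift correspond to strings of length `k`. -/
def fixEquiv {k : ℕ} (hk : k ∣ Q) (hkpos : 0 < k) :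
    {s : Fin Q → Fin 2 // (sQ Q ^ k) s = s} ≃ (Fin k → Fin 2) where
  toFun s := fun j => s.1 ⟨j.1, lt_of_lt_of_le j.2 (Nat.le_of_dvd (NeZero.pos Q) hk)⟩
  invFun f := ⟨fun i => f ⟨i.val % k, Nat.mod_lt _ hkpos⟩, by
    skip
    rw [fix_iff]
    intro i
    congr 1
    apply Fin.ext
    show (i + (k : Fin Q)).val % k = i.val % k
    rw [Fin.add_def]
    simp only [Fin.val_natCast]
    rw [Nat.mod_mod_of_dvd _ hk, Nat.add_mod, kmodQ_mod k hk hkpos, Nat.add_zero]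
    exact Nat.mod_mod_of_dvd _ dvd_rfl⟩
  left_inv s := by
    apply Subtype.ext
    funext i
    exact (periodic_val hk hkpos ((fix_iff s.1).mp s.2) i).symm
  right_inv f := by
    funext j
    exact congrArg f (Fin.ext (Nat.mod_eq_of_lt j.2))

lemma card_fix {k : ℕ} (hk : k ∣ Q) (hkpos : 0 < k) :
    (univ.filter fun s : Fin Q → Fin 2 => (sQ Q ^ k) s = s).card = 2 ^ k := by
  have h1 : (univ.filter fun s : Fin Q → Fin 2 => (sQ Q ^ k) s = s).card
      = Fintype.card {s : Fin Q → Fin 2 // (sQ Q ^ k) s = s} := (Fintype.card_subtype _).symm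
  rw [h1, Fintype.card_congr (fixEquiv hk hkpos), Fintype.card_fun,
    Fintype.card_fin, Fintype.card_fin]

variable (Q)

/-- number of strings of minimal period `k`. -/
def Nk (k : ℕ) : ℕ := (univ.filter fun s : Fin Q → Fin 2 => mp Q s = k).card

/-- number of orbits of size `k`. -/
def Ok (k : ℕ) : ℕ := (univ.filter fun o : OrbT Q => mp Q o.out = k).card

variable {Q}

lemma fiber_eq (o : OrbT Q) :
    (univ.filter fun s : Fin Q → Fin 2 => Quotient.mk (orbSetoid Q) s = o) = orbF o.out := by
  ext s
  simp only [Finset.mem_filter, Finset.mem_univ, true_and, mem_orbF]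
  constructor
  · intro h
    subst h
    exact out_rel s
  · intro h
    rw [← Quotient.out_eq o]
    exact Quotient.sound (orbRel_symm h)

lemma Nk_eq (k : ℕ) : Nk Q k = k * Ok Q k := by
  rw [Nk, Finset.card_eq_sum_card_fiberwise
    (f := fun s => Quotient.mk (orbSetoid Q) s)
    (t := univ.filter fun o : OrbT Q => mp Q o.out = k)
    (fun s hs => by
      simp only [Finset.mem_coe, Finset.mem_filter, Finset.mem_univ, true_and] at hs
      refine Finset.mem_coe.mpr (Finset.mem_filter.mpr ⟨Finset.mem_univ _, ?_⟩)
      rw [mp_eq_of_rel (out_rel s)]; exact hs)]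
  have hc : ∀ o ∈ univ.filter (fun o : OrbT Q => mp Q o.out = k),
      ((univ.filter fun s : Fin Q → Fin 2 => mp Q s = k).filter
        (fun s => Quotient.mk (orbSetoid Q) s = o)).card = k := by
    intro o ho
    simp only [Finset.mem_filter, Finset.mem_univ, true_and] at ho
    rw [Finset.filter_filter]
    have : (univ.filter fun s : Fin Q → Fin 2 =>
        mp Q s = k ∧ Quotient.mk (orbSetoid Q) s = o) =
        (univ.filter fun s => Quotient.mk (orbSetoid Q) s = o) := by
      apply Finset.filter_congr
      intro s _
      simp only [and_iff_right_iff_imp]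
      intro h
      subst h
      rw [← mp_eq_of_rel (out_rel s), ho]
    rw [this, fiber_eq, card_orbF, ho]
  trans ∑ _o ∈ univ.filter (fun o : OrbT Q => mp Q o.out = k), k
  · exact Finset.sum_congr rfl (fun o ho => by convert hc o ho)
  · rw [Finset.sum_const, smul_eq_mul, Ok, mul_comm]

lemma sum_Nk {k : ℕ} (hk : k ∣ Q) (hkpos : 0 < k) :
    ∑ k' ∈ k.divisors, Nk Q k' = 2 ^ k := by
  rw [← card_fix hk hkpos,
    Finset.card_eq_sum_card_fiberwise (f := fun s => mp Q s) (t := k.divisors)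
    (fun s hs => by
      simp only [Finset.mem_coe, Finset.mem_filter, Finset.mem_univ, true_and] at hs
      exact Nat.mem_divisors.mpr ⟨(pow_fix_iff _ _).mp hs, hkpos.ne'⟩)]
  apply Finset.sum_congr rfl
  intro k' hk'
  rw [Nk, Finset.filter_filter]
  congr 1
  apply Finset.filter_congr
  intro s _
  constructor
  · intro h
    exact ⟨by rw [pow_fix_iff, h]; exact (Nat.mem_divisors.mp hk').1, h⟩
  · exact fun h => h.2

lemma Nk_eq_cnt : ∀ k : ℕ, k ∣ Q → 0 < k → (Nk Q k : ℤ) = cnt k := by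
  intro k
  induction k using Nat.strong_induction_on with
  | _ k IH =>
    intro hk hkpos
    have hsum := sum_Nk hk hkpos
    rw [← Nat.insert_self_properDivisors hkpos.ne',
      Finset.sum_insert Nat.self_notMem_properDivisors] at hsum
    have hps : ∑ d' ∈ k.properDivisors.attach, cnt d'.1
        = ((∑ d' ∈ k.properDivisors, Nk Q d' : ℕ) : ℤ) := by
      push_cast
      rw [← Finset.sum_attach k.properDivisors (fun d' => (Nk Q d' : ℤ))]
      apply Finset.sum_congr rfl
      intro d' _
      have hd' := Nat.mem_properDivisors.mp d'.2
      have hpos : 0 < d'.1 := Nat.pos_of_dvd_of_pos hd'.1 hkpos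
      exact (IH d'.1 hd'.2 (hd'.1.trans hk) hpos).symm
    rw [cnt, hps]
    have h2 : (Nk Q k : ℤ) + ((∑ d' ∈ k.properDivisors, Nk Q d' : ℕ) : ℤ) = 2 ^ k := by
      exact_mod_cast hsum
    linarith [h2]

end Count

noncomputable section Eig

set_option linter.unusedSectionVars false

variable {Q d : ℕ} [NeZero Q] {ω : ℂ}

lemma mem_eig_iff (g : (Fin Q → Fin 2) → ℂ) :
    g ∈ Module.End.eigenspace (translationOp Q) ω ↔ ∀ s, g (sQ Q s) = ω * g s := by
  rw [Module.End.mem_eigenspace_iff, funext_iff]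
  apply forall_congr'
  intro s
  rfl

lemma eig_iter {g : (Fin Q → Fin 2) → ℂ} (hg : ∀ s, g (sQ Q s) = ω * g s)
    (n : ℕ) (s : Fin Q → Fin 2) : g ((sQ Q ^ n) s) = ω ^ n * g s := by
  induction n with
  | zero => simp
  | succ n ih =>
    rw [pow_succ', Equiv.Perm.mul_apply, hg, ih, pow_succ']
    ring

lemma omega_pow_iff (hd : 0 < d) (hω : ω ^ d = 1)
    (hord : ∀ n : ℕ, 0 < n → n < d → ω ^ n ≠ 1) (n : ℕ) : ω ^ n = 1 ↔ d ∣ n := by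
  constructor
  · intro h
    have hn : n = d * (n / d) + n % d := (Nat.div_add_mod n d).symm
    rw [hn, pow_add, pow_mul, hω, one_pow, one_mul] at h
    rcases Nat.eq_zero_or_pos (n % d) with h0 | h0
    · exact Nat.dvd_of_mod_eq_zero h0
    · exact absurd h (hord _ h0 (Nat.mod_lt _ hd))
  · rintro ⟨c, rfl⟩
    rw [pow_mul, hω, one_pow]

lemma pow_congr_orbit_le {r : Fin Q → Fin 2} (hone : ω ^ mp Q r = 1) {a b : ℕ}
    (hab : a ≤ b) (h : (sQ Q ^ a) r = (sQ Q ^ b) r) : ω ^ a = ω ^ b := by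
  have h1 : (sQ Q ^ a) ((sQ Q ^ (b - a)) r) = (sQ Q ^ a) r := by
    rw [← Equiv.Perm.mul_apply, ← pow_add]
    rw [Nat.add_sub_cancel' hab]
    exact h.symm
  have h2 : (sQ Q ^ (b - a)) r = r := (sQ Q ^ a).injective h1
  obtain ⟨c, hc⟩ := (pow_fix_iff _ _).mp h2
  have : b = a + mp Q r * c := by omega
  rw [this, pow_add, pow_mul, hone, one_pow, mul_one]

lemma pow_congr_orbit {r : Fin Q → Fin 2} (hone : ω ^ mp Q r = 1) {a b : ℕ}
    (h : (sQ Q ^ a) r = (sQ Q ^ b) r) : ω ^ a = ω ^ b := by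
  rcases le_total a b with hab | hab
  · exact pow_congr_orbit_le hone hab h
  · exact (pow_congr_orbit_le hone hab h.symm).symm

variable (Q d)

/-- Good orbits: those whose size is divisible by `d`. -/
def GoodO := {o : OrbT Q // d ∣ mp Q o.out}

instance : Fintype (GoodO Q d) := Subtype.fintype _

variable {Q d}

/-- exponent choice: least `n` with `σ^n ⟦s⟧.out = s`. -/
def Jfun (s : Fin Q → Fin 2) : ℕ := Nat.find (out_rel s)

lemma Jfun_spec (s : Fin Q → Fin 2) :
    (sQ Q ^ Jfun s) (Quotient.mk (orbSetoid Q) s).out = s := Nat.find_spec (out_rel s)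

/-- Evaluation at orbit representatives. -/
def evalRep : Module.End.eigenspace (translationOp Q) ω →ₗ[ℂ] (GoodO Q d → ℂ) where
  toFun g := fun o => g.1 o.1.out
  map_add' g g' := rfl
  map_smul' c g := rfl

lemma evalRep_injective (hd : 0 < d) (hω : ω ^ d = 1)
    (hord : ∀ n : ℕ, 0 < n → n < d → ω ^ n ≠ 1) :
    Function.Injective (evalRep (Q := Q) (d := d) (ω := ω)) := by
  rw [← LinearMap.ker_eq_bot, LinearMap.ker_eq_bot']
  intro g hg
  apply Subtype.ext
  funext s
  have hgE := (mem_eig_iff g.1).mp g.2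
  have key : ∀ t : Fin Q → Fin 2, ∀ n : ℕ, g.1 ((sQ Q ^ n) t) = ω ^ n * g.1 t :=
    fun t n => eig_iter hgE n t
  show g.1 s = 0
  by_cases hgood : d ∣ mp Q s
  · have hout : g.1 (Quotient.mk (orbSetoid Q) s).out = 0 := by
      have := congrFun hg ⟨Quotient.mk (orbSetoid Q) s, by
        rw [mp_eq_of_rel (out_rel s)]; exact hgood⟩
      exact this
    obtain ⟨n, hn⟩ := out_rel s
    rw [← hn, key, hout, mul_zero]
  · have h1 : g.1 ((sQ Q ^ mp Q s) s) = ω ^ mp Q s * g.1 s := key s _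
    rw [(pow_fix_iff _ _).mpr dvd_rfl] at h1
    have h2 : (ω ^ mp Q s - 1) * g.1 s = 0 := by linear_combination -h1
    rcases mul_eq_zero.mp h2 with h3 | h3
    · exfalso
      apply hgood
      exact (omega_pow_iff hd hω hord _).mp (by linear_combination h3)
    · exact h3

lemma evalRep_surjective (hd : 0 < d) (hω : ω ^ d = 1) :
    Function.Surjective (evalRep (Q := Q) (d := d) (ω := ω)) := by
  intro h
  set g : (Fin Q → Fin 2) → ℂ := fun s =>
    if hgood : d ∣ mp Q s then
      ω ^ Jfun s * h ⟨Quotient.mk (orbSetoid Q) s, by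
        rw [mp_eq_of_rel (out_rel s)]; exact hgood⟩
    else 0 with hgdef
  have hgE : ∀ s, g (sQ Q s) = ω * g s := by
    intro s
    have hrel1 : orbRel Q s (sQ Q s) := ⟨1, by rw [pow_one]⟩
    have hq : Quotient.mk (orbSetoid Q) (sQ Q s) = Quotient.mk (orbSetoid Q) s :=
      Quotient.sound (orbRel_symm hrel1)
    have hmm : mp Q (sQ Q s) = mp Q s := (mp_eq_of_rel hrel1).symm
    by_cases hgood : d ∣ mp Q s
    · rw [hgdef]
      simp only
      rw [dif_pos (hmm ▸ hgood : d ∣ mp Q (sQ Q s)), dif_pos hgood]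
      have hsub : ∀ (p1 : d ∣ mp Q (Quotient.mk (orbSetoid Q) (sQ Q s)).out)
          (p2 : d ∣ mp Q (Quotient.mk (orbSetoid Q) s).out),
          (⟨Quotient.mk (orbSetoid Q) (sQ Q s), p1⟩ : GoodO Q d)
            = ⟨Quotient.mk (orbSetoid Q) s, p2⟩ :=
        fun _ _ => Subtype.ext hq
      rw [hsub _ (by rw [mp_eq_of_rel (out_rel s)]; exact hgood)]
      have hro : (Quotient.mk (orbSetoid Q) (sQ Q s)).out = (Quotient.mk (orbSetoid Q) s).out :=
        congrArg Quotient.out hq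
      have spec1 : (sQ Q ^ Jfun (sQ Q s)) (Quotient.mk (orbSetoid Q) s).out = sQ Q s := by
        rw [← hro]; exact Jfun_spec (sQ Q s)
      have spec2 : (sQ Q ^ (Jfun s + 1)) (Quotient.mk (orbSetoid Q) s).out = sQ Q s := by
        rw [pow_succ', Equiv.Perm.mul_apply, Jfun_spec s]
      have hone : ω ^ mp Q (Quotient.mk (orbSetoid Q) s).out = 1 := by
        rw [mp_eq_of_rel (out_rel s)]
        obtain ⟨c, hc⟩ := hgood
        rw [hc, pow_mul, hω, one_pow]
      have := pow_congr_orbit hone (spec1.trans spec2.symm)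
      rw [this, pow_succ']
      ring
    · rw [hgdef]
      simp only
      rw [dif_neg (fun hc => hgood (hmm ▸ hc)), dif_neg hgood, mul_zero]
  refine ⟨⟨g, (mem_eig_iff g).mpr hgE⟩, ?_⟩
  funext o
  show g o.1.out = h o
  rw [hgdef]
  simp only
  have hcond : d ∣ mp Q o.1.out := o.2
  rw [dif_pos hcond]
  have hq : Quotient.mk (orbSetoid Q) o.1.out = o.1 := Quotient.out_eq o.1
  have hJ : Jfun o.1.out = 0 := by
    rw [Jfun]
    refine (Nat.find_eq_zero _).mpr ?_
    show (sQ Q ^ 0) (Quotient.mk (orbSetoid Q) o.1.out).out = o.1.out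
    rw [pow_zero]
    show (Quotient.mk (orbSetoid Q) o.1.out).out = o.1.out
    rw [hq]
  rw [hJ, pow_zero, one_mul]
  congr 1
  exact Subtype.ext hq

end Eig

section Main

set_option linter.unusedSectionVars false

variable {Q d : ℕ} [NeZero Q]

lemma G_eq (hd : 0 < d) :
    Fintype.card (GoodO Q d)
      = ∑ k ∈ Q.divisors.filter (fun k => d ∣ k), Ok Q k := by
  rw [show Fintype.card (GoodO Q d)
      = (univ.filter fun o : OrbT Q => d ∣ mp Q o.out).card from Fintype.card_subtype _]
  rw [Finset.card_eq_sum_card_fiberwise (f := fun o : OrbT Q => mp Q o.out)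
    (t := Q.divisors.filter (fun k => d ∣ k))
    (fun o ho => by
      simp only [Finset.mem_coe, Finset.mem_filter, Finset.mem_univ, true_and] at ho ⊢
      exact ⟨Nat.mem_divisors.mpr ⟨mp_dvd_Q _, (NeZero.pos Q).ne'⟩, ho⟩)]
  apply Finset.sum_congr rfl
  intro k hk
  simp only [Finset.mem_filter] at hk
  rw [Ok, Finset.filter_filter]
  congr 1
  apply Finset.filter_congr
  intro o _
  constructor
  · exact fun h => h.2
  · intro h
    exact ⟨h ▸ hk.2, h⟩

theorem finrank_eigenspace_translationOp' (Q d : ℕ) (hQ : 1 ≤ Q) (ω : ℂ)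
    (hd : 0 < d) (hdQ : d ∣ Q) (hω : ω ^ d = 1)
    (hord : ∀ n : ℕ, 0 < n → n < d → ω ^ n ≠ 1) :
    (Module.finrank ℂ (Module.End.eigenspace (translationOp Q) ω) : ℤ)
      = ∑ k ∈ Q.divisors.filter (fun k => d ∣ k), cnt k / (k : ℤ) := by
  haveI : NeZero Q := ⟨by omega⟩
  have e : Module.End.eigenspace (translationOp Q) ω ≃ₗ[ℂ] (GoodO Q d → ℂ) :=
    LinearEquiv.ofBijective evalRep
      ⟨evalRep_injective hd hω hord, evalRep_surjective hd hω⟩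
  rw [e.finrank_eq, Module.finrank_fintype_fun_eq_card, G_eq hd]
  push_cast
  apply Finset.sum_congr rfl
  intro k hk
  simp only [Finset.mem_filter] at hk
  have hkQ : k ∣ Q := (Nat.mem_divisors.mp hk.1).1
  have hkpos : 0 < k := Nat.pos_of_mem_divisors hk.1
  rw [← Nk_eq_cnt k hkQ hkpos]
  have : (Nk Q k : ℤ) = (k : ℤ) * (Ok Q k : ℤ) := by exact_mod_cast Nk_eq (Q := Q) k
  rw [this, Int.mul_ediv_cancel_left _ (by exact_mod_cast hkpos.ne')]

end Main

/-- For `Q ≥ 1` and a root of unity `ω` of order `d` with `d ∣ Q`, the complex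
dimension of the eigenspace `Eig(ω)` of the cyclic shift operator `τ` on
`(ℂ²)^{⊗Q}` equals `Σ_{d ∣ k ∣ Q} cnt(k)/k`. -/
theorem finrank_eigenspace_translationOp (Q d : ℕ) (hQ : 1 ≤ Q) (ω : ℂ)
    (hd : 0 < d) (hdQ : d ∣ Q) (hω : ω ^ d = 1)
    (hord : ∀ n : ℕ, 0 < n → n < d → ω ^ n ≠ 1) :
    (Module.finrank ℂ (Module.End.eigenspace (translationOp Q) ω) : ℤ)
      = ∑ k ∈ Q.divisors.filter (fun k => d ∣ k), cnt k / (k : ℤ) :=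
  finrank_eigenspace_translationOp' Q d hQ ω hd hdQ hω hord
end

section
/- For the cyclic shift operator τ on (ℂ²)^{⊗Q} with Q ≥ 2, and for every eigenvalue ω ≠ 1 of τ, we have dim Eig(1) ≥ dim Eig(ω) + 2. -/
/-! An `ω`-eigenvector `v` of the permutation operator `v ↦ v ∘ σ` satisfies
`v (σ^n x) = ω^n * v x`, so it is determined by its values at chosen representatives of the
cycles of `σ`; hence `v ↦ v ∘ rep` embeds `Eig(ω)` into the `σ`-invariant functions `Eig(1)`.
For `ω ≠ 1` eigenvectors vanish at the fixed points of `σ`, so this image lies in the kernel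
of restriction to `Fix(σ)`, which maps `Eig(1)` onto `Fix(σ) → K`; thus
`dim Eig(ω) + #Fix(σ) ≤ dim Eig(1)`.
The cyclic shift fixes the two constant bit strings. -/

open Module Module.End Function

namespace Equiv.Perm

variable {X : Type*} (σ : Perm X)

noncomputable def cycleRep (x : X) : X :=
  (Quotient.mk (SameCycle.setoid σ) x).out

theorem sameCycle_cycleRep (x : X) : SameCycle σ (σ.cycleRep x) x :=
  Quotient.mk_out (s := SameCycle.setoid σ) x

theorem cycleRep_apply (x : X) : σ.cycleRep (σ x) = σ.cycleRep x :=
  congrArg Quotient.out <| Quotient.sound (s := SameCycle.setoid σ) <|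
    sameCycle_apply_left.2 (SameCycle.refl σ x)

theorem cycleRep_eq_self {x : X} (hx : IsFixedPt σ x) : σ.cycleRep x = x :=
  ((σ.sameCycle_cycleRep x).symm.eq_of_left hx).symm

section CommRing

variable {R : Type*} [CommRing R] {ω : R} {v : X → R}

theorem mem_eigenspace_funLeft_iff :
    v ∈ eigenspace (LinearMap.funLeft R R σ) ω ↔ ∀ x, v (σ x) = ω * v x := by
  simp [funext_iff]

theorem apply_pow_apply_of_mem_eigenspace (hv : v ∈ eigenspace (LinearMap.funLeft R R σ) ω)
    (n : ℕ) (x : X) : v ((σ ^ n) x) = ω ^ n * v x := by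
  induction n with
  | zero => simp
  | succ n ih =>
    rw [pow_succ', Perm.mul_apply, σ.mem_eigenspace_funLeft_iff.1 hv, ih, pow_succ', mul_assoc]

theorem eq_zero_of_mem_eigenspace_of_comp_cycleRep_eq_zero [Finite X]
    (hv : v ∈ eigenspace (LinearMap.funLeft R R σ) ω) (h : v ∘ σ.cycleRep = 0) : v = 0 := by
  funext x
  obtain ⟨n, hn⟩ := (σ.sameCycle_cycleRep x).exists_nat_pow_eq
  rw [← hn, σ.apply_pow_apply_of_mem_eigenspace hv, ← comp_apply (f := v), h, Pi.zero_apply,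
    mul_zero, Pi.zero_apply]

end CommRing

section Field

variable {K : Type*} [Field K] {ω : K} {v : X → K}

theorem apply_eq_zero_of_mem_eigenspace_of_isFixedPt (hω : ω ≠ 1)
    (hv : v ∈ eigenspace (LinearMap.funLeft K K σ) ω) {x : X} (hx : IsFixedPt σ x) : v x = 0 := by
  have h := σ.mem_eigenspace_funLeft_iff.1 hv x
  rw [hx] at h
  have h' : (1 - ω) * v x = 0 := by linear_combination h
  exact (mul_eq_zero.1 h').resolve_left (sub_ne_zero.2 hω.symm)

theorem extend_fixedPoints_mem_eigenspace_one (f : fixedPoints σ → K) :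
    extend Subtype.val f 0 ∈ eigenspace (LinearMap.funLeft K K σ) 1 := by
  rw [mem_eigenspace_funLeft_iff]
  intro x
  rw [one_mul]
  by_cases hx : IsFixedPt σ x
  · rw [hx.eq]
  · have hσx : ¬ IsFixedPt σ (σ x) := fun h => hx (σ.injective h)
    rw [extend_apply' _ _ _ (by simpa using hσx), extend_apply' _ _ _ (by simpa using hx),
      Pi.zero_apply, Pi.zero_apply]

noncomputable def compCycleRep (ω : K) :
    eigenspace (LinearMap.funLeft K K σ) ω →ₗ[K] eigenspace (LinearMap.funLeft K K σ) 1 :=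
  ((LinearMap.funLeft K K σ.cycleRep).comp (eigenspace _ ω).subtype).codRestrict _ fun _ =>
    σ.mem_eigenspace_funLeft_iff.2 fun x => by simp [cycleRep_apply]

theorem compCycleRep_injective [Finite X] (ω : K) : Injective (σ.compCycleRep ω) := by
  refine (injective_iff_map_eq_zero _).2 fun v hv => Subtype.ext ?_
  exact σ.eq_zero_of_mem_eigenspace_of_comp_cycleRep_eq_zero v.2 (congrArg Subtype.val hv)

theorem finrank_eigenspace_add_card_fixedPoints_le [Finite X] (hω : ω ≠ 1) :
    finrank K (eigenspace (LinearMap.funLeft K K σ) ω) + Nat.card (fixedPoints σ)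
      ≤ finrank K (eigenspace (LinearMap.funLeft K K σ) 1) := by
  have : Fintype (fixedPoints σ) := Fintype.ofFinite _
  let restrict : eigenspace (LinearMap.funLeft K K σ) 1 →ₗ[K] (fixedPoints σ → K) :=
    (LinearMap.funLeft K K Subtype.val).comp (eigenspace _ 1).subtype
  have h_surj : Surjective restrict := fun f =>
    ⟨⟨_, σ.extend_fixedPoints_mem_eigenspace_one f⟩,
      funext fun z => Subtype.val_injective.extend_apply f 0 z⟩
  have h_range : LinearMap.range (σ.compCycleRep ω) ≤ LinearMap.ker restrict := by
    rintro _ ⟨v, rfl⟩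
    refine LinearMap.mem_ker.2 (funext fun z => ?_)
    change v.1 (σ.cycleRep z) = 0
    rw [σ.cycleRep_eq_self z.2]
    exact σ.apply_eq_zero_of_mem_eigenspace_of_isFixedPt hω v.2 z.2
  have h_rank := restrict.finrank_range_add_finrank_ker
  rw [LinearMap.range_eq_top.2 h_surj, finrank_top, finrank_fintype_fun_eq_card,
    ← Nat.card_eq_fintype_card] at h_rank
  calc finrank K (eigenspace (LinearMap.funLeft K K σ) ω) + Nat.card (fixedPoints σ)
      = finrank K (LinearMap.range (σ.compCycleRep ω)) + Nat.card (fixedPoints σ) := by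
        rw [LinearMap.finrank_range_of_inj (σ.compCycleRep_injective ω)]
    _ ≤ finrank K (LinearMap.ker restrict) + Nat.card (fixedPoints σ) := by
        gcongr; exact Submodule.finrank_mono h_range
    _ = _ := by omega

end Field

end Equiv.Perm

def shiftPerm (Q : ℕ) : Equiv.Perm (Fin Q → Fin 2) :=
  (finRotate Q).symm.arrowCongr (Equiv.refl _)

theorem translationOp_eq_funLeft_shiftPerm (Q : ℕ) :
    translationOp Q = LinearMap.funLeft ℂ ℂ (shiftPerm Q) :=
  rfl

theorem two_le_card_fixedPoints_shiftPerm {Q : ℕ} (hQ : 1 ≤ Q) :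
    2 ≤ Nat.card (fixedPoints (shiftPerm Q)) := by
  refine Finite.one_lt_card_iff_nontrivial.2 ⟨⟨const _ 0, rfl⟩, ⟨const _ 1, rfl⟩, fun h => ?_⟩
  simpa using congrFun (congrArg Subtype.val h) ⟨0, hQ⟩

theorem finrank_eigenspace_one_ge_general (Q : ℕ) (hQ : 2 ≤ Q) (ω : ℂ) (hω : ω ≠ 1) :
    Module.finrank ℂ (Module.End.eigenspace (translationOp Q) ω) + 2
      ≤ Module.finrank ℂ (Module.End.eigenspace (translationOp Q) 1) := by
  rw [translationOp_eq_funLeft_shiftPerm]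
  exact (Nat.add_le_add_left (two_le_card_fixedPoints_shiftPerm (by omega)) _).trans
    ((shiftPerm Q).finrank_eigenspace_add_card_fixedPoints_le hω)

/-- For the cyclic shift operator `τ` on `(ℂ²)^{⊗Q}` with `Q ≥ 2` and every
eigenvalue `ω ≠ 1` of `τ`, we have `dim Eig(1) ≥ dim Eig(ω) + 2`. -/
theorem finrank_eigenspace_one_ge (Q : ℕ) (hQ : 2 ≤ Q) (ω : ℂ) (hω : ω ≠ 1)
    (h : Module.End.HasEigenvalue (translationOp Q) ω) :
    Module.finrank ℂ (Module.End.eigenspace (translationOp Q) ω) + 2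
      ≤ Module.finrank ℂ (Module.End.eigenspace (translationOp Q) 1) :=
  finrank_eigenspace_one_ge_general Q hQ ω hω
end

section
/- For the single-qubit circuit C(θ₁, θ₂, θ₃) = R_Y(θ₃)R_Z(θ₂)R_X(θ₁)|0⟩, the Gram matrix G(θ) = J(θ)ᵀJ(θ) of the real Jacobian J(θ) (a 4 × 3 real matrix) satisfies det(G(θ)) = cos²(θ₂)/64. Hence the three parameters are independent (the map has rank 3) precisely when cos(θ₂) ≠ 0. -/
open Matrix

/-- The single-qubit rotation gate `R_X(θ) = exp(−iθX/2)`. -/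
noncomputable def RX (θ : ℝ) : Matrix (Fin 2) (Fin 2) ℂ :=
  !![(Real.cos (θ / 2) : ℂ), -Complex.I * Real.sin (θ / 2);
     -Complex.I * Real.sin (θ / 2), (Real.cos (θ / 2) : ℂ)]

/-- The single-qubit rotation gate `R_Y(θ) = exp(−iθY/2)`. -/
noncomputable def RY (θ : ℝ) : Matrix (Fin 2) (Fin 2) ℂ :=
  !![(Real.cos (θ / 2) : ℂ), -(Real.sin (θ / 2) : ℂ);
     (Real.sin (θ / 2) : ℂ), (Real.cos (θ / 2) : ℂ)]

/-- The single-qubit rotation gate `R_Z(θ) = exp(−iθZ/2)`. -/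
noncomputable def RZ (θ : ℝ) : Matrix (Fin 2) (Fin 2) ℂ :=
  !![Complex.exp (-Complex.I * θ / 2), 0; 0, Complex.exp (Complex.I * θ / 2)]

/-- The circuit state `C(θ₁, θ₂, θ₃) = R_Y(θ₃) R_Z(θ₂) R_X(θ₁) |0⟩`. -/
noncomputable def C18 (θ₁ θ₂ θ₃ : ℝ) : Fin 2 → ℂ :=
  (RY θ₃ * RZ θ₂ * RX θ₁).mulVec ![1, 0]

/-- The real `4 × 3` Jacobian of `C`, stacking real and imaginary parts of the
partial derivatives `∂₁C`, `∂₂C`, `∂₃C` as columns. -/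
noncomputable def J18 (θ₁ θ₂ θ₃ : ℝ) : Matrix (Fin 4) (Fin 3) ℝ :=
  Matrix.of fun i j =>
    let D : Fin 2 → ℂ :=
      ![deriv (fun t => C18 t θ₂ θ₃) θ₁,
        deriv (fun t => C18 θ₁ t θ₃) θ₂,
        deriv (fun t => C18 θ₁ θ₂ t) θ₃] j
    ![(D 0).re, (D 1).re, (D 0).im, (D 1).im] i

/-!
Each gate is a half-angle rotation `R(θ) = cos(θ/2) • 1 + sin(θ/2) • (-i σ)`, so the circuit
state depends on each parameter only through `cos(θᵢ/2)` and `sin(θᵢ/2)`, and differentiating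
it amounts to shifting that parameter by `π` (the parameter-shift rule `∂ⱼC(θ) = ½ C(θ + π eⱼ)`).
The columns of the Jacobian are therefore explicit trigonometric polynomials in the half angles,
and their Gram matrix is `!![1/4, 0, sin θ₂/4; 0, 1/4, 0; sin θ₂/4, 0, 1/4]`, with determinant
`cos² θ₂ / 64`. Finally `rank J = rank (Jᵀ J)`, and a square matrix has full rank exactly when
its determinant is nonzero.
-/

open Real

def pauliX : Matrix (Fin 2) (Fin 2) ℂ := !![0, 1; 1, 0]

def pauliY : Matrix (Fin 2) (Fin 2) ℂ := !![0, -Complex.I; Complex.I, 0]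

def pauliZ : Matrix (Fin 2) (Fin 2) ℂ := !![1, 0; 0, -1]

theorem RX_eq_cos_add_sin_pauliX (θ : ℝ) :
    RX θ = cos (θ / 2) • (1 : Matrix (Fin 2) (Fin 2) ℂ) + sin (θ / 2) • (-Complex.I • pauliX) := by
  ext i j
  fin_cases i <;> fin_cases j <;> simp [RX, pauliX, mul_comm]

theorem RY_eq_cos_add_sin_pauliY (θ : ℝ) :
    RY θ = cos (θ / 2) • (1 : Matrix (Fin 2) (Fin 2) ℂ) + sin (θ / 2) • (-Complex.I • pauliY) := by
  ext i j
  fin_cases i <;> fin_cases j <;> simp [RY, pauliY]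

theorem RZ_eq_cos_add_sin_pauliZ (θ : ℝ) :
    RZ θ = cos (θ / 2) • (1 : Matrix (Fin 2) (Fin 2) ℂ) + sin (θ / 2) • (-Complex.I • pauliZ) := by
  have hneg : Complex.exp (-Complex.I * θ / 2) = cos (θ / 2) - sin (θ / 2) * Complex.I := by
    rw [show -Complex.I * θ / 2 = ((-(θ / 2) : ℝ) : ℂ) * Complex.I by push_cast; ring,
      Complex.exp_mul_I, ← Complex.ofReal_cos, ← Complex.ofReal_sin, cos_neg, sin_neg]
    push_cast
    ring
  have hpos : Complex.exp (Complex.I * θ / 2) = cos (θ / 2) + sin (θ / 2) * Complex.I := by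
    rw [show Complex.I * θ / 2 = ((θ / 2 : ℝ) : ℂ) * Complex.I by push_cast; ring,
      Complex.exp_mul_I, ← Complex.ofReal_cos, ← Complex.ofReal_sin]
  rw [RZ, hneg, hpos]
  ext i j
  fin_cases i <;> fin_cases j <;> simp [pauliZ, sub_eq_add_neg]

theorem hasDerivAt_cos_half_smul_add_sin_half_smul {E : Type*} [NormedAddCommGroup E]
    [NormedSpace ℝ E] (u v : E) (t : ℝ) :
    HasDerivAt (fun s => cos (s / 2) • u + sin (s / 2) • v)
      ((1 / 2 : ℝ) • (cos ((t + π) / 2) • u + sin ((t + π) / 2) • v)) t := by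
  have hc := ((hasDerivAt_id' t).div_const 2).cos
  have hs := ((hasDerivAt_id' t).div_const 2).sin
  refine ((hc.smul_const u).add (hs.smul_const v)).congr_deriv ?_
  rw [add_div, cos_add_pi_div_two, sin_add_pi_div_two]
  module

theorem hasDerivAt_mul_mul_mulVec {n : Type*} [Fintype n] [DecidableEq n]
    {R : ℝ → Matrix n n ℂ} {A B : Matrix n n ℂ}
    (hR : ∀ θ, R θ = cos (θ / 2) • A + sin (θ / 2) • B)
    (P Q : Matrix n n ℂ) (v : n → ℂ) (t : ℝ) :
    HasDerivAt (fun s => (P * R s * Q) *ᵥ v) ((1 / 2 : ℝ) • ((P * R (t + π) * Q) *ᵥ v)) t := by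
  have hlin (θ : ℝ) : (P * R θ * Q) *ᵥ v
      = cos (θ / 2) • ((P * A * Q) *ᵥ v) + sin (θ / 2) • ((P * B * Q) *ᵥ v) := by
    simp only [hR, Matrix.mul_add, Matrix.add_mul, Matrix.mul_smul, Matrix.smul_mul,
      Matrix.add_mulVec, Matrix.smul_mulVec]
  simp only [hlin]
  exact hasDerivAt_cos_half_smul_add_sin_half_smul _ _ t

theorem deriv_C18_fst (θ₁ θ₂ θ₃ : ℝ) :
    deriv (fun t => C18 t θ₂ θ₃) θ₁ = (1 / 2 : ℝ) • C18 (θ₁ + π) θ₂ θ₃ := by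
  simpa only [C18, Matrix.mul_one] using
    (hasDerivAt_mul_mul_mulVec RX_eq_cos_add_sin_pauliX (RY θ₃ * RZ θ₂) 1 ![1, 0] θ₁).deriv

theorem deriv_C18_snd (θ₁ θ₂ θ₃ : ℝ) :
    deriv (fun t => C18 θ₁ t θ₃) θ₂ = (1 / 2 : ℝ) • C18 θ₁ (θ₂ + π) θ₃ :=
  (hasDerivAt_mul_mul_mulVec RZ_eq_cos_add_sin_pauliZ (RY θ₃) (RX θ₁) ![1, 0] θ₂).deriv

theorem deriv_C18_thd (θ₁ θ₂ θ₃ : ℝ) :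
    deriv (fun t => C18 θ₁ θ₂ t) θ₃ = (1 / 2 : ℝ) • C18 θ₁ θ₂ (θ₃ + π) := by
  simpa only [C18, Matrix.one_mul, Matrix.mul_assoc] using
    (hasDerivAt_mul_mul_mulVec RY_eq_cos_add_sin_pauliY 1 (RZ θ₂ * RX θ₁) ![1, 0] θ₃).deriv

/-- `R_Y(θ₃) R_Z(θ₂) R_X(θ₁) |0⟩` multiplied out, with `cᵢ = cos (θᵢ / 2)`, `sᵢ = sin (θᵢ / 2)`. -/
def halfAngleState (c₁ s₁ c₂ s₂ c₃ s₃ : ℝ) : Fin 2 → ℂ :=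
  ![⟨c₃ * c₂ * c₁ - s₃ * s₂ * s₁, s₃ * c₂ * s₁ - c₃ * s₂ * c₁⟩,
    ⟨s₃ * c₂ * c₁ + c₃ * s₂ * s₁, -(s₃ * s₂ * c₁) - c₃ * c₂ * s₁⟩]

theorem C18_eq_halfAngleState (θ₁ θ₂ θ₃ : ℝ) :
    C18 θ₁ θ₂ θ₃ = halfAngleState (cos (θ₁ / 2)) (sin (θ₁ / 2)) (cos (θ₂ / 2)) (sin (θ₂ / 2))
      (cos (θ₃ / 2)) (sin (θ₃ / 2)) := by
  rw [C18, RX_eq_cos_add_sin_pauliX, RY_eq_cos_add_sin_pauliY, RZ_eq_cos_add_sin_pauliZ]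
  generalize cos (θ₁ / 2) = c₁, sin (θ₁ / 2) = s₁, cos (θ₂ / 2) = c₂, sin (θ₂ / 2) = s₂,
    cos (θ₃ / 2) = c₃, sin (θ₃ / 2) = s₃
  ext i
  fin_cases i <;> apply Complex.ext <;>
    simp [pauliX, pauliY, pauliZ, halfAngleState, Matrix.mul_apply, Fin.sum_univ_two,
      Matrix.mulVec, dotProduct] <;> ring

/-- Column `j` is `½ C(θ + π eⱼ)`; shifting `θⱼ` by `π` sends `(cⱼ, sⱼ)` to `(-sⱼ, cⱼ)`. -/
noncomputable def halfAngleJacobian (c₁ s₁ c₂ s₂ c₃ s₃ : ℝ) : Matrix (Fin 4) (Fin 3) ℝ :=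
  Matrix.of fun i j =>
    let D : Fin 2 → ℂ :=
      ![(1 / 2 : ℝ) • halfAngleState (-s₁) c₁ c₂ s₂ c₃ s₃,
        (1 / 2 : ℝ) • halfAngleState c₁ s₁ (-s₂) c₂ c₃ s₃,
        (1 / 2 : ℝ) • halfAngleState c₁ s₁ c₂ s₂ (-s₃) c₃] j
    ![(D 0).re, (D 1).re, (D 0).im, (D 1).im] i

theorem J18_eq_halfAngleJacobian (θ₁ θ₂ θ₃ : ℝ) :
    J18 θ₁ θ₂ θ₃ = halfAngleJacobian (cos (θ₁ / 2)) (sin (θ₁ / 2)) (cos (θ₂ / 2))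
      (sin (θ₂ / 2)) (cos (θ₃ / 2)) (sin (θ₃ / 2)) := by
  simp only [J18, deriv_C18_fst, deriv_C18_snd, deriv_C18_thd]
  simp only [halfAngleJacobian, C18_eq_halfAngleState, add_div, cos_add_pi_div_two,
    sin_add_pi_div_two]

theorem gram_halfAngleJacobian {c₁ s₁ c₂ s₂ c₃ s₃ : ℝ} (h₁ : c₁ ^ 2 + s₁ ^ 2 = 1)
    (h₂ : c₂ ^ 2 + s₂ ^ 2 = 1) (h₃ : c₃ ^ 2 + s₃ ^ 2 = 1) :
    (halfAngleJacobian c₁ s₁ c₂ s₂ c₃ s₃)ᵀ * halfAngleJacobian c₁ s₁ c₂ s₂ c₃ s₃ =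
      !![1 / 4, 0, s₂ * c₂ / 2; 0, 1 / 4, 0; s₂ * c₂ / 2, 0, 1 / 4] := by
  have h₁₂₃ : (c₁ ^ 2 + s₁ ^ 2) * (c₂ ^ 2 + s₂ ^ 2) * (c₃ ^ 2 + s₃ ^ 2) = 1 := by
    rw [h₁, h₂, h₃, one_mul, one_mul]
  have h₁₃ : (c₁ ^ 2 + s₁ ^ 2) * (c₃ ^ 2 + s₃ ^ 2) = 1 := by rw [h₁, h₃, one_mul]
  ext i j
  fin_cases i <;> fin_cases j <;>
    simp [halfAngleJacobian, halfAngleState, Matrix.mul_apply, Fin.sum_univ_succ] <;>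
    first
      | ring1
      | linear_combination (1 / 4 : ℝ) * h₁₂₃
      | linear_combination s₂ * c₂ / 2 * h₁₃

theorem gram_J18 (θ₁ θ₂ θ₃ : ℝ) :
    (J18 θ₁ θ₂ θ₃)ᵀ * J18 θ₁ θ₂ θ₃ =
      !![1 / 4, 0, sin θ₂ / 4; 0, 1 / 4, 0; sin θ₂ / 4, 0, 1 / 4] := by
  have hsin : sin θ₂ / 4 = sin (θ₂ / 2) * cos (θ₂ / 2) / 2 := by
    have h := sin_two_mul (θ₂ / 2)
    rw [mul_div_cancel₀ θ₂ two_ne_zero] at h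
    linarith
  rw [J18_eq_halfAngleJacobian, gram_halfAngleJacobian (cos_sq_add_sin_sq _) (cos_sq_add_sin_sq _)
    (cos_sq_add_sin_sq _), hsin]

theorem Matrix.rank_eq_card_iff_det_ne_zero {n K : Type*} [Fintype n] [DecidableEq n] [Field K]
    (A : Matrix n n K) : A.rank = Fintype.card n ↔ A.det ≠ 0 := by
  refine ⟨fun h => ?_, rank_of_det_ne_zero⟩
  have hrange : LinearMap.range A.mulVecLin = ⊤ :=
    Submodule.eq_top_of_finrank_eq (by rwa [Module.finrank_fintype_fun_eq_card])
  exact ((isUnit_iff_isUnit_det A).1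
    (mulVec_surjective_iff_isUnit.1 (LinearMap.range_eq_top.1 hrange))).ne_zero

/-- For `C(θ₁,θ₂,θ₃) = R_Y(θ₃)R_Z(θ₂)R_X(θ₁)|0⟩`, the Gram matrix
`G(θ) = J(θ)ᵀJ(θ)` of the real Jacobian satisfies `det G(θ) = cos²(θ₂)/64`;
hence the three parameters are independent (`rank J(θ) = 3`) precisely when
`cos θ₂ ≠ 0`. -/
theorem gram_det_RYRZRX :
    ∀ θ₁ θ₂ θ₃ : ℝ,
      ((J18 θ₁ θ₂ θ₃)ᵀ * J18 θ₁ θ₂ θ₃).det = Real.cos θ₂ ^ 2 / 64 ∧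
      ((J18 θ₁ θ₂ θ₃).rank = 3 ↔ Real.cos θ₂ ≠ 0) := by
  intro θ₁ θ₂ θ₃
  have hdet : ((J18 θ₁ θ₂ θ₃)ᵀ * J18 θ₁ θ₂ θ₃).det = cos θ₂ ^ 2 / 64 := by
    rw [gram_J18, det_fin_three]
    simp only [of_apply, cons_val', cons_val_zero, cons_val_fin_one, cons_val_one, cons_val,
      mul_zero, sub_zero, zero_mul, add_zero]
    linear_combination (-1 / 64 : ℝ) * sin_sq_add_cos_sq θ₂
  refine ⟨hdet, ?_⟩
  have hrank := rank_eq_card_iff_det_ne_zero ((J18 θ₁ θ₂ θ₃)ᵀ * J18 θ₁ θ₂ θ₃)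
  rw [Fintype.card_fin, hdet, rank_transpose_mul_self] at hrank
  simpa using hrank
end
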